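/- arXiv:1506.02172 — 2 statements merged into one kernel-verified Lean document; each statement's English description precedes it below -/
import Mathlib

section
/- Let D be a principal ideal domain, p ∈ D prime, ℓ ≥ 1, R_ℓ = D/(p^ℓ), and A an n×n matrix over R_ℓ whose (p^ℓ)-minimal polynomial has degree d. Suppose f_1, …, f_m generate the null ideal N(A) = {f ∈ R_ℓ[X] : f(A) = 0} as an ideal of R_ℓ[X] and satisfy: (1) deg(f_1) < ⋯ < deg(f_m) = d; (2) f_i = p̄^{t_i}·g_i for monic g_i ∈ R_ℓ[X] and natural numbers t_1 > ⋯ > t_m (p̄ the class of p); (3) every f ∈ N(A) lies in Σ_{i: deg(f_i) ≤ deg(f)} f_i·R_ℓ[X]. Then the R_ℓ-module N(A)^{<d} = {f ∈ N(A) : deg(f) < d} equals Σ_{i=1}^{m−1} Σ_{t=1}^{s_i} (X^{t−1}·f_i)·R_ℓ, where s_i = deg(f_{i+1}) − deg(f_i). -/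
/-- `f(A) ∈ d·M_n(S)`, i.e. `f` belongs to the `(d)`-ideal `N_{(d)}(A)` of the matrix `A`. -/
def memNullDvd {S : Type*} [CommRing S] {n : ℕ} (A : Matrix (Fin n) (Fin n) S) (d : S)
    (f : Polynomial S) : Prop :=
  ∃ B : Matrix (Fin n) (Fin n) S, Polynomial.aeval A f = d • B

/-- `f` is a `(d)`-minimal polynomial of `A`: a monic polynomial in `N_{(d)}(A)` of minimal
degree among monic polynomials in `N_{(d)}(A)`. -/
def IsMinPolyMod {S : Type*} [CommRing S] {n : ℕ} (A : Matrix (Fin n) (Fin n) S) (d : S)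
    (f : Polynomial S) : Prop :=
  f.Monic ∧ memNullDvd A d f ∧
    ∀ g : Polynomial S, g.Monic → memNullDvd A d g → f.degree ≤ g.degree

/-!
Every `X^u f_i` with `u < s_i` lies in `N(A)` and has degree `< deg f_{i+1} ≤ d`, which gives
one inclusion. Conversely, let `f ∈ N(A)` be nonzero of degree `k < d` and let `j` be the index
with `deg f_j ≤ k < deg f_{j+1}`. By (3), `f = Σ f_i c_i` where only the `i ≤ j` contribute,
and since `t_i ≥ t_j` for these, `p̄^{t_j}` divides `f`; write its leading coefficient as
`p̄^{t_j} a`. As `g_j` is monic, `a X^{k - deg f_j} f_j` has the same leading term as `f`, and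
`k - deg f_j < s_j`; subtracting it lowers the degree, so induction on the degree concludes.
-/

section

open Polynomial Finset

theorem Fin.exists_le_lt_succ {m : ℕ} (φ : Fin m → ℕ) {k : ℕ} {i₀ : Fin m}
    (h₀ : φ i₀ ≤ k) (hlast : k < φ ⟨m - 1, Nat.sub_one_lt_of_lt i₀.isLt⟩) :
    ∃ (j : Fin m) (h : (j : ℕ) + 1 < m), φ j ≤ k ∧ k < φ ⟨j + 1, h⟩ := by
  classical
  obtain ⟨j, hj, hmax⟩ : ∃ j, φ j ≤ k ∧ ∀ i, φ i ≤ k → i ≤ j := by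
    have hS : (univ.filter fun i => φ i ≤ k).Nonempty := ⟨i₀, by simp [h₀]⟩
    exact ⟨_, (mem_filter.1 (max'_mem _ hS)).2, fun i hi => le_max' _ i (by simp [hi])⟩
  have hsucc : (j : ℕ) + 1 < m := by
    by_contra h
    have hj_last : j = ⟨m - 1, Nat.sub_one_lt_of_lt i₀.isLt⟩ :=
      Fin.ext (by have := j.isLt; show (j : ℕ) = m - 1; omega)
    exact (hj.trans_lt (hj_last ▸ hlast)).false
  refine ⟨j, hsucc, hj, lt_of_not_ge fun hle => ?_⟩
  simpa [Fin.le_def] using hmax ⟨_, hsucc⟩ hle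

variable {R : Type*} [CommRing R] {m : ℕ}

def degGap (fs : Fin m → R[X]) (i : Fin m) : ℕ :=
  if h : (i : ℕ) + 1 < m then (fs ⟨i + 1, h⟩).natDegree - (fs i).natDegree else 0

noncomputable def shiftSpan (fs : Fin m → R[X]) : Submodule R R[X] :=
  Submodule.span R (Set.range fun x : Σ i, Fin (degGap fs i) => X ^ (x.2 : ℕ) * fs x.1)

variable {fs : Fin m → R[X]}

theorem mem_shiftSpan_iff {f : R[X]} :
    f ∈ shiftSpan fs ↔ ∃ r : Fin m → ℕ → R,
      f = ∑ i, ∑ u ∈ range (degGap fs i), C (r i u) * (X ^ u * fs i) := by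
  simp only [shiftSpan, Submodule.mem_span_range_iff_exists_fun, Fintype.sum_sigma,
    smul_eq_C_mul]
  constructor
  · rintro ⟨c, rfl⟩
    refine ⟨fun i u => if h : u < degGap fs i then c ⟨i, u, h⟩ else 0,
      sum_congr rfl fun i _ => ?_⟩
    rw [← Fin.sum_univ_eq_sum_range]
    simp
  · rintro ⟨r, rfl⟩
    exact ⟨fun x => r x.1 x.2, sum_congr rfl fun i _ =>
      Fin.sum_univ_eq_sum_range (fun u => C (r i u) * (X ^ u * fs i)) _⟩

theorem X_pow_mul_mem_shiftSpan {i : Fin m} {u : ℕ} (hu : u < degGap fs i) :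
    X ^ u * fs i ∈ shiftSpan fs :=
  Submodule.subset_span ⟨⟨i, u, hu⟩, rfl⟩

theorem shiftSpan_le_restrictScalars {I : Ideal R[X]} (hI : ∀ i, fs i ∈ I) :
    shiftSpan fs ≤ I.restrictScalars R :=
  Submodule.span_le.2 <| by
    rintro _ ⟨⟨i, u⟩, rfl⟩
    exact I.mul_mem_left _ (hI i)

theorem natDegree_add_lt_of_lt_degGap {i : Fin m} {u : ℕ} (hu : u < degGap fs i) :
    ∃ h : (i : ℕ) + 1 < m, u + (fs i).natDegree < (fs ⟨i + 1, h⟩).natDegree := by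
  unfold degGap at hu
  split_ifs at hu with h
  · exact ⟨h, by omega⟩
  · omega

theorem shiftSpan_le_degreeLT {d : ℕ} (hd : ∀ i, (fs i).natDegree ≤ d) :
    shiftSpan fs ≤ degreeLT R d :=
  Submodule.span_le.2 <| by
    rintro _ ⟨⟨i, u, hu⟩, rfl⟩
    obtain ⟨h, hlt⟩ := natDegree_add_lt_of_lt_degGap hu
    have hle : (X ^ (u : ℕ) * fs i).natDegree ≤ u + (fs i).natDegree :=
      natDegree_mul_le.trans (Nat.add_le_add_right (natDegree_X_pow_le u) _)
    refine mem_degreeLT.2 <| degree_le_natDegree.trans_lt ?_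
    exact_mod_cast (hle.trans_lt hlt).trans_le (hd _)

theorem C_pow_dvd_of_natDegree_lt (hmono : Monotone fun i => (fs i).natDegree) {π : R}
    {t : Fin m → ℕ} (hanti : Antitone t) (hdvd : ∀ i, C (π ^ t i) ∣ fs i) {f : R[X]}
    {c : Fin m → R[X]} (hf : f = ∑ i, fs i * c i)
    (hc : ∀ i, f.natDegree < (fs i).natDegree → c i = 0) {j : Fin m} (hj : (j : ℕ) + 1 < m)
    (hkj : f.natDegree < (fs ⟨j + 1, hj⟩).natDegree) :
    C (π ^ t j) ∣ f := by
  rw [hf]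
  refine dvd_sum fun i _ => ?_
  by_cases hci : c i = 0
  · simp [hci]
  have hij : i ≤ j := by
    by_contra! hji
    exact hci (hc i (hkj.trans_le (hmono (Fin.mk_le_of_le_val (by omega)))))
  exact dvd_mul_of_dvd_left ((map_dvd C (pow_dvd_pow π (hanti hij))).trans (hdvd i)) _

theorem exists_mem_shiftSpan_degree_sub_lt (hm : 0 < m)
    (hmono : Monotone fun i => (fs i).natDegree)
    {π : R} {t : Fin m → ℕ} (hanti : Antitone t) {g : Fin m → R[X]}
    (hgm : ∀ i, (g i).Monic)
    (hfac : ∀ i, fs i = C (π ^ t i) * g i) {f : R[X]} (hf0 : f ≠ 0)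
    (hlast : f.natDegree < (fs ⟨m - 1, Nat.sub_one_lt_of_lt hm⟩).natDegree)
    {c : Fin m → R[X]} (hf : f = ∑ i, fs i * c i)
    (hc : ∀ i, f.natDegree < (fs i).natDegree → c i = 0) :
    ∃ q ∈ shiftSpan fs, (f - q).degree < f.degree := by
  obtain ⟨i₀, hi₀⟩ : ∃ i, c i ≠ 0 := by
    by_contra! h
    exact hf0 (by simp [hf, h])
  obtain ⟨j, hj, hjk, hkj⟩ :=
    Fin.exists_le_lt_succ (fun i => (fs i).natDegree) (not_lt.1 (mt (hc i₀) hi₀)) hlast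
  obtain ⟨a, hlc⟩ := (C_dvd_iff_dvd_coeff _ _).1
    (C_pow_dvd_of_natDegree_lt hmono hanti (fun i => ⟨g i, hfac i⟩) hf hc hj hkj) f.natDegree
  replace hlc : f.leadingCoeff = π ^ t j * a := hlc
  have hf_lc : f.leadingCoeff ≠ 0 := leadingCoeff_ne_zero.2 hf0
  have : Nontrivial R := ⟨⟨_, _, hf_lc⟩⟩
  have hdegj : (fs j).natDegree = (g j).natDegree := by
    rw [hfac j]
    exact natDegree_C_mul_of_mul_ne_zero
      (by rw [(hgm j).leadingCoeff, mul_one]; exact left_ne_zero_of_mul (hlc ▸ hf_lc))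
  set u := f.natDegree - (fs j).natDegree
  have hmonic : (X ^ u * g j).Monic := (monic_X_pow u).mul (hgm j)
  have hq : C a * (X ^ u * fs j) = C f.leadingCoeff * (X ^ u * g j) := by
    rw [hfac j, hlc, C_mul]
    ring
  refine ⟨C a * (X ^ u * fs j), ?_, degree_sub_lt_left ?_ hf0 ?_⟩
  · rw [← smul_eq_C_mul]
    refine Submodule.smul_mem _ a (X_pow_mul_mem_shiftSpan ?_)
    rw [degGap, dif_pos hj]
    omega
  · rw [hq, degree_C_mul_of_mul_ne_zero (by rwa [hmonic.leadingCoeff, mul_one]),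
      degree_eq_natDegree hf0, degree_eq_natDegree hmonic.ne_zero,
      (monic_X_pow u).natDegree_mul (hgm j), natDegree_X_pow]
    norm_cast
    omega
  · rw [hq, leadingCoeff_mul_monic hmonic, leadingCoeff_C]

theorem mem_shiftSpan_of_mem (hm : 0 < m) (hmono : Monotone fun i => (fs i).natDegree)
    {π : R} {t : Fin m → ℕ} (hanti : Antitone t) {g : Fin m → R[X]}
    (hgm : ∀ i, (g i).Monic)
    (hfac : ∀ i, fs i = C (π ^ t i) * g i) {I : Ideal R[X]} (hI : ∀ i, fs i ∈ I)
    (hsupp : ∀ f ∈ I, ∃ c : Fin m → R[X],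
      f = ∑ i, fs i * c i ∧ ∀ i, f.natDegree < (fs i).natDegree → c i = 0)
    {f : R[X]} (hf : f ∈ I)
    (hdeg : f.degree < (fs ⟨m - 1, Nat.sub_one_lt_of_lt hm⟩).natDegree) :
    f ∈ shiftSpan fs := by
  induction hk : f.natDegree using Nat.strong_induction_on generalizing f with
  | _ k ih =>
    by_cases hf0 : f = 0
    · simp [hf0]
    obtain ⟨c, hfc, hc⟩ := hsupp f hf
    obtain ⟨q, hq, hlt⟩ := exists_mem_shiftSpan_degree_sub_lt hm hmono hanti hgm hfac hf0
      ((natDegree_lt_iff_degree_lt hf0).2 hdeg) hfc hc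
    have hsub : f - q ∈ shiftSpan fs := by
      by_cases h0 : f - q = 0
      · simp [h0]
      exact ih _ (hk ▸ natDegree_lt_natDegree h0 hlt)
        (I.sub_mem hf (shiftSpan_le_restrictScalars hI hq)) (hlt.trans hdeg) rfl
    simpa using add_mem hsub hq

end

/-- Let `R_ℓ = D/(p^ℓ)`, `A` a matrix over `R_ℓ` whose `(p^ℓ)`-minimal
polynomial has degree `d`, and `f_1, …, f_m` generators of the null ideal
`N(A) = {f : f(A) = 0}` of `A` satisfying conditions (1)–(3). Then the `R_ℓ`-module
`N(A)^{<d}` of elements of `N(A)` of degree `< d` equals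
`Σ_{i=1}^{m−1} Σ_{t=1}^{s_i} (X^{t−1}·f_i)·R_ℓ` with `s_i = deg f_{i+1} − deg f_i`
(stated elementwise). -/
theorem stmt11 {D : Type*} [CommRing D]
    (p : D) (ℓ : ℕ)
    {n : ℕ} (A : Matrix (Fin n) (Fin n) (D ⧸ Ideal.span {p ^ ℓ}))
    (d : ℕ)
    (m : ℕ) (hm : 0 < m)
    (fs : Fin m → Polynomial (D ⧸ Ideal.span {p ^ ℓ}))
    -- `f_1, …, f_m` generate the null ideal `N(A)` of `A` as an ideal of `R_ℓ[X]`: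
    (hgen : ∀ f : Polynomial (D ⧸ Ideal.span {p ^ ℓ}),
      Polynomial.aeval A f = 0 ↔
        ∃ c : Fin m → Polynomial (D ⧸ Ideal.span {p ^ ℓ}), f = ∑ i, fs i * c i)
    -- (1) `deg f_1 < ⋯ < deg f_m = d`:
    (hmono : StrictMono fun i : Fin m => (fs i).natDegree)
    (hlast : (fs ⟨m - 1, by omega⟩).natDegree = d)
    -- (2) `f_i = p̄^{t_i}·g_i` with `g_i` monic and `t_1 > ⋯ > t_m`:
    (t : Fin m → ℕ) (g : Fin m → Polynomial (D ⧸ Ideal.span {p ^ ℓ}))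
    (hgm : ∀ i, (g i).Monic)
    (hfac : ∀ i, fs i = Polynomial.C ((Ideal.Quotient.mk (Ideal.span {p ^ ℓ}) p) ^ t i) * g i)
    (hanti : StrictAnti t)
    -- (3) every `f ∈ N(A)` lies in `Σ_{i : deg f_i ≤ deg f} f_i·R_ℓ[X]`:
    (hsupp : ∀ f : Polynomial (D ⧸ Ideal.span {p ^ ℓ}), Polynomial.aeval A f = 0 →
      ∃ c : Fin m → Polynomial (D ⧸ Ideal.span {p ^ ℓ}),
        f = ∑ i, fs i * c i ∧ ∀ i, f.natDegree < (fs i).natDegree → c i = 0) :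
    -- conclusion: `N(A)^{<d} = Σ_{i=1}^{m−1} Σ_{t=1}^{s_i} (X^{t−1} f_i)·R_ℓ`
    ∀ f : Polynomial (D ⧸ Ideal.span {p ^ ℓ}),
      (Polynomial.aeval A f = 0 ∧ f.degree < (d : WithBot ℕ)) ↔
        ∃ r : Fin m → ℕ → (D ⧸ Ideal.span {p ^ ℓ}),
          f = ∑ i : Fin m,
            ∑ u ∈ Finset.range
              (if h : (i : ℕ) + 1 < m then (fs ⟨(i : ℕ) + 1, h⟩).natDegree - (fs i).natDegree
                else 0),
              Polynomial.C (r i u) * (Polynomial.X ^ u * fs i) := by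
  have hnull : ∀ i, fs i ∈ RingHom.ker (Polynomial.aeval A) := fun i =>
    (hgen (fs i)).2 ⟨Pi.single i 1, by simp [Pi.single_apply]⟩
  have hle : ∀ i, (fs i).natDegree ≤ d := fun i =>
    hlast ▸ hmono.monotone (Fin.mk_le_of_le_val (by have := i.isLt; dsimp only; omega))
  intro f
  refine Iff.trans ⟨?_, fun h => ?_⟩ (mem_shiftSpan_iff (fs := fs))
  · rintro ⟨h0, hdeg⟩
    exact mem_shiftSpan_of_mem hm hmono.monotone hanti.antitone hgm hfac hnull
      (fun f hf => hsupp f (RingHom.mem_ker.1 hf)) (RingHom.mem_ker.2 h0) (hlast ▸ hdeg)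
  · exact ⟨shiftSpan_le_restrictScalars hnull h,
      Polynomial.mem_degreeLT.1 (shiftSpan_le_degreeLT hle h)⟩
end

section
/- Let D be a principal ideal domain, p ∈ D prime, A an n×n matrix over D, ℓ ∈ ℕ, and let ν_j ∈ D[X] be (p^j)-minimal polynomials of A for 1 ≤ j ≤ ℓ. Write Ā_j for the image of A in M_n(D/(p^j)) and d_p for the p-degree of A. The following are equivalent: (1) N_{(p^ℓ)}(A) = ν_ℓ·D[X] + p^ℓ·D[X]; (2) N_{(p^j)}(A) = ν_j·D[X] + p^j·D[X] for all 1 ≤ j ≤ ℓ; (3) (D/(p^j))[Ā_j] ≅ (D/(p^j))^{d_p} as D/(p^j)-modules for all 1 ≤ j ≤ ℓ; (4) deg(ν_ℓ) = d_p; (5) ν_ℓ is a (p^j)-minimal polynomial of A for all 1 ≤ j ≤ ℓ. -/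
/-!
Everything rests on one degree bound: if `f ∈ N_{(p^j)}(A)` has degree below `d_p`, then `p^j`
divides `f`. For `j = 1` this holds because over the field `D/(p)` a nonzero such `f` could be
normalised to a monic annihilator of `Ā` of degree smaller than that of a `(p)`-minimal
polynomial; the general case follows by dividing out `p` one factor at a time.

Consequently a monic `ν ∈ N_{(p^j)}(A)` of degree `d_p` generates `N_{(p^j)}(A)` modulo `p^j`
(divide by `ν` and apply the bound to the remainder), which gives (4) ⇒ (2), (5), and then
`(D/(p^j))[Ā_j] ≅ (D/(p^j))[X]/(ν)` is free on `1, Ā_j, …, Ā_j^(d_p - 1)`. Conversely, (1) puts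
`p^(ℓ-1) ν_1` into `ν_ℓ D[X] + p^ℓ D[X]`, so modulo `p^ℓ` the monic `ν_ℓ` divides a nonzero
polynomial of degree at most `d_p`. Under (3), the map `(D/(p^ℓ))^(d_p) → (D/(p^ℓ))[Ā_ℓ]` given by
the first `d_p` powers of `Ā_ℓ` is injective by the degree bound, hence bijective because
`D/(p^ℓ)` is Artinian; so `Ā_ℓ^(d_p)` is a combination of lower powers, which yields a monic
element of `N_{(p^ℓ)}(A)` of degree `d_p`.
-/

open Polynomial

section CommRing

variable {S : Type*} [CommRing S] {n : ℕ} {A : Matrix (Fin n) (Fin n) S} {d : S} {f ν : S[X]}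

theorem nontrivial_quotient_span_pow {p : S} (hp : Prime p) {j : ℕ} (hj : j ≠ 0) :
    Nontrivial (S ⧸ Ideal.span {p ^ j}) :=
  Ideal.Quotient.nontrivial_iff.2 fun h =>
    hp.not_isUnit ((isUnit_pow_iff hj).1 (Ideal.span_singleton_eq_top.1 h))

theorem Matrix.exists_eq_smul_iff_map_eq_zero {l m : Type*} (M : Matrix l m S) :
    (∃ B, M = d • B) ↔ M.map (Ideal.Quotient.mk (Ideal.span {d})) = 0 := by
  constructor
  · rintro ⟨B, rfl⟩
    ext i k
    simp
  · intro h
    have hdvd (i k) : d ∣ M i k := by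
      simpa [Ideal.Quotient.eq_zero_iff_mem, Ideal.mem_span_singleton] using
        congrFun (congrFun h i) k
    choose B hB using hdvd
    exact ⟨Matrix.of B, by ext i k; simp [hB]⟩

theorem aeval_matrix_map_quotientMk {m : Type*} [Fintype m] [DecidableEq m] (M : Matrix m m S)
    (I : Ideal S) (f : S[X]) :
    aeval (M.map (Ideal.Quotient.mk I)) (f.map (Ideal.Quotient.mk I)) =
      (aeval M f).map (Ideal.Quotient.mk I) := by
  rw [← Ideal.Quotient.algebraMap_eq, aeval_map_algebraMap]
  exact aeval_algHom_apply (Ideal.Quotient.mkₐ S I).mapMatrix M f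

theorem memNullDvd_iff_aeval_map_eq_zero :
    memNullDvd A d f ↔
      aeval (A.map (Ideal.Quotient.mk (Ideal.span {d})))
        (f.map (Ideal.Quotient.mk (Ideal.span {d}))) = 0 := by
  rw [aeval_matrix_map_quotientMk, ← Matrix.exists_eq_smul_iff_map_eq_zero]
  rfl

theorem map_quotientMk_span_singleton_eq_zero_iff :
    f.map (Ideal.Quotient.mk (Ideal.span {d})) = 0 ↔ C d ∣ f := by
  simp [Polynomial.ext_iff, Ideal.Quotient.eq_zero_iff_mem, Ideal.mem_span_singleton,
    C_dvd_iff_dvd_coeff]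

theorem memNullDvd.of_dvd {e : S} (h : e ∣ d) (hf : memNullDvd A d f) : memNullDvd A e f := by
  obtain ⟨B, hB⟩ := hf
  obtain ⟨c, rfl⟩ := h
  exact ⟨c • B, by rw [hB, mul_smul]⟩

theorem memNullDvd.C_mul (a : S) (hf : memNullDvd A d f) : memNullDvd A (a * d) (C a * f) := by
  obtain ⟨B, hB⟩ := hf
  exact ⟨B, by rw [← smul_eq_C_mul, map_smul, hB, mul_smul]⟩

theorem memNullDvd.of_C_mul [IsDomain S] {a : S} (ha : a ≠ 0)
    (hf : memNullDvd A (a * d) (C a * f)) : memNullDvd A d f := by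
  obtain ⟨B, hB⟩ := hf
  refine ⟨B, smul_right_injective _ ha ?_⟩
  dsimp only
  rw [← map_smul, smul_eq_C_mul, hB, mul_smul]

theorem IsMinPolyMod.natDegree_le_of_dvd {e : S} {g : S[X]} (hν : IsMinPolyMod A d ν)
    (hde : d ∣ e) (hg : g.Monic) (hgA : memNullDvd A e g) : ν.natDegree ≤ g.natDegree :=
  natDegree_le_natDegree (hν.2.2 g hg (hgA.of_dvd hde))

theorem IsMinPolyMod.natDegree_eq {g : S[X]} (hν : IsMinPolyMod A d ν)
    (hg : IsMinPolyMod A d g) : ν.natDegree = g.natDegree :=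
  le_antisymm (hν.natDegree_le_of_dvd dvd_rfl hg.1 hg.2.1)
    (hg.natDegree_le_of_dvd dvd_rfl hν.1 hν.2.1)

theorem IsMinPolyMod.of_natDegree_le [Nontrivial S] {e : S} {g : S[X]}
    (hν : IsMinPolyMod A d ν) (hde : d ∣ e) (hg : g.Monic) (hgA : memNullDvd A e g)
    (hdeg : g.natDegree ≤ ν.natDegree) : IsMinPolyMod A e g := by
  refine ⟨hg, hgA, fun f hf hfA => ?_⟩
  calc g.degree ≤ ν.natDegree := degree_le_of_natDegree_le hdeg
    _ = ν.degree := (degree_eq_natDegree hν.1.ne_zero).symm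
    _ ≤ f.degree := hν.2.2 f hf (hfA.of_dvd hde)

theorem IsMinPolyMod.natDegree_le_of_aeval_map_eq_zero (hν : IsMinPolyMod A d ν)
    {q : (S ⧸ Ideal.span {d})[X]} (hq : q.Monic)
    (h : aeval (A.map (Ideal.Quotient.mk (Ideal.span {d}))) q = 0) :
    ν.natDegree ≤ q.natDegree := by
  obtain ⟨g, rfl, hgdeg, hg⟩ := lifts_and_natDegree_eq_and_monic
    (map_surjective _ Ideal.Quotient.mk_surjective q) hq
  exact hgdeg ▸ hν.natDegree_le_of_dvd dvd_rfl hg (memNullDvd_iff_aeval_map_eq_zero.2 h)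

theorem ker_aeval_map_eq_span_of_memNullDvd_iff
    (hN : ∀ f, memNullDvd A d f ↔ ∃ g h : S[X], f = ν * g + C d * h) :
    RingHom.ker (aeval (A.map (Ideal.Quotient.mk (Ideal.span {d})))) =
      Ideal.span {ν.map (Ideal.Quotient.mk (Ideal.span {d}))} := by
  ext q
  obtain ⟨f, rfl⟩ := map_surjective _ Ideal.Quotient.mk_surjective q
  rw [RingHom.mem_ker, ← memNullDvd_iff_aeval_map_eq_zero, hN, Ideal.mem_span_singleton]
  constructor
  · rintro ⟨g, h, rfl⟩
    exact ⟨g.map (Ideal.Quotient.mk _), by simp⟩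
  · rintro ⟨g', hg'⟩
    obtain ⟨g, rfl⟩ := map_surjective _ Ideal.Quotient.mk_surjective g'
    obtain ⟨h, hh⟩ := map_quotientMk_span_singleton_eq_zero_iff.1
      (by rw [Polynomial.map_sub, Polynomial.map_mul, hg', sub_self] : (f - ν * g).map _ = 0)
    exact ⟨g, h, by rw [← hh]; ring⟩

theorem natDegree_le_of_forall_memNullDvd_iff [IsDomain S] {p : S} (hp : Prime p) {ν₁ : S[X]}
    (hν₁ : ν₁.Monic) (hν₁A : memNullDvd A p ν₁) (hν : ν.Monic) {k : ℕ}
    (hN : ∀ f, memNullDvd A (p ^ (k + 1)) f ↔ ∃ g h : S[X], f = ν * g + C (p ^ (k + 1)) * h) :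
    ν.natDegree ≤ ν₁.natDegree := by
  have := nontrivial_quotient_span_pow hp k.succ_ne_zero
  set σ := Ideal.Quotient.mk (Ideal.span {p ^ (k + 1)})
  obtain ⟨g, h, hgh⟩ := (hN _).1 (pow_succ p k ▸ hν₁A.C_mul (p ^ k))
  have hσ : σ (p ^ (k + 1)) = 0 := Ideal.Quotient.mk_singleton_self _
  have hdvd : ν.map σ ∣ C (σ (p ^ k)) * ν₁.map σ :=
    ⟨g.map σ, by
      simpa only [Polynomial.map_add, Polynomial.map_mul, map_C, hσ, C_0, zero_mul, add_zero]
        using congrArg (map σ) hgh⟩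
  have hσk : σ (p ^ k) ≠ 0 := by
    rw [Ne, Ideal.Quotient.eq_zero_iff_mem, Ideal.mem_span_singleton,
      pow_dvd_pow_iff hp.ne_zero hp.not_isUnit]
    omega
  have hne : C (σ (p ^ k)) * ν₁.map σ ≠ 0 := (hν₁.map σ).mul_left_ne_zero (C_ne_zero.2 hσk)
  calc ν.natDegree = (ν.map σ).natDegree := (hν.natDegree_map σ).symm
    _ ≤ (C (σ (p ^ k)) * ν₁.map σ).natDegree :=
      not_lt.1 fun hlt => (hν.map σ).not_dvd_of_natDegree_lt hne hlt hdvd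
    _ ≤ ν₁.natDegree := (natDegree_C_mul_le _ _).trans natDegree_map_le

end CommRing

section AdjoinSingleton

variable {R S : Type*} [CommRing R] [Ring S] [Algebra R S] {x : S}

theorem nonempty_adjoin_singleton_linearEquiv_of_ker_aeval {g : R[X]} (hg : g.Monic)
    (hker : RingHom.ker (aeval x) = Ideal.span {g}) :
    Nonempty (Algebra.adjoin R {x} ≃ₗ[R] (Fin g.natDegree → R)) :=
  ⟨((Subalgebra.equivOfEq _ _ (Algebra.adjoin_singleton_eq_range_aeval R x)).trans
      ((Ideal.quotientKerEquivRange (aeval x)).symm.trans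
        (Ideal.quotientEquivAlgOfEq R hker))).toLinearEquiv.trans
    (AdjoinRoot.powerBasis' hg).basis.equivFun⟩

theorem exists_monic_aeval_eq_zero_of_linearEquiv [IsArtinianRing R] {k : ℕ}
    (e : Algebra.adjoin R {x} ≃ₗ[R] (Fin k → R))
    (hx : ∀ q : R[X], q.degree < k → aeval x q = 0 → q = 0) :
    ∃ g : R[X], g.Monic ∧ g.natDegree ≤ k ∧ aeval x g = 0 := by
  let Ψ : (Fin k → R) →ₗ[R] Algebra.adjoin R {x} :=
    LinearMap.codRestrict (Subalgebra.toSubmodule (Algebra.adjoin R {x}))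
      ((aeval x).toLinearMap ∘ₗ (degreeLT R k).subtype ∘ₗ (degreeLTEquiv R k).symm.toLinearMap)
      fun c => by
        rw [Subalgebra.mem_toSubmodule, Algebra.adjoin_singleton_eq_range_aeval]
        exact ⟨_, rfl⟩
  have hΨ : Function.Injective Ψ := by
    refine (injective_iff_map_eq_zero Ψ).2 fun c hc => ?_
    have hq := hx _ (mem_degreeLT.1 ((degreeLTEquiv R k).symm c).2) (congrArg Subtype.val hc)
    exact (LinearEquiv.map_eq_zero_iff _).1 (Subtype.ext hq)
  obtain ⟨c, hc⟩ := (IsArtinian.bijective_of_injective_endomorphism (e.toLinearMap ∘ₗ Ψ)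
    (e.injective.comp hΨ)).2
      (e ⟨x ^ k, Subalgebra.pow_mem _ (Algebra.self_mem_adjoin_singleton R x) k⟩)
  set q : R[X] := ((degreeLTEquiv R k).symm c).1
  have hqx : aeval x q = x ^ k := congrArg Subtype.val (e.injective hc)
  have hqk : q.degree < k := mem_degreeLT.1 ((degreeLTEquiv R k).symm c).2
  refine ⟨X ^ k - q, monic_X_pow_sub hqk, ?_, by rw [map_sub, map_pow, aeval_X, hqx, sub_self]⟩
  exact (natDegree_sub_le_of_le (natDegree_X_pow_le k) (natDegree_le_of_degree_le hqk.le)).trans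
    (max_self k).le

end AdjoinSingleton

theorem isArtinianRing_quotient_span_singleton {R : Type*} [CommRing R] [IsDomain R]
    [IsNoetherianRing R] [Ring.KrullDimLE 1 R] {x : R} (hx : x ≠ 0) :
    IsArtinianRing (R ⧸ Ideal.span {x}) :=
  isArtinian_of_tower R (isFiniteLength_iff_isNoetherian_isArtinian.1
    (isFiniteLength_quotient_span_singleton R (mem_nonZeroDivisors_of_ne_zero hx))).2

section PrincipalIdealDomain

variable {D : Type*} [CommRing D] [IsDomain D] [IsPrincipalIdealRing D] {p : D} {n : ℕ}
  {A : Matrix (Fin n) (Fin n) D} {ν₁ ν : D[X]} {j : ℕ}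

theorem IsMinPolyMod.C_dvd_of_degree_lt (hp : Prime p) (hν₁ : IsMinPolyMod A p ν₁) {f : D[X]}
    (hf : memNullDvd A p f) (hdeg : f.degree < ν₁.degree) : C p ∣ f := by
  have : (Ideal.span {p}).IsMaximal := PrincipalIdealRing.isMaximal_of_irreducible hp.irreducible
  let := Ideal.Quotient.field (Ideal.span {p})
  rw [← map_quotientMk_span_singleton_eq_zero_iff]
  by_contra hq
  set q := f.map (Ideal.Quotient.mk (Ideal.span {p}))
  have hqA : aeval (A.map (Ideal.Quotient.mk (Ideal.span {p}))) (q * C q.leadingCoeff⁻¹) = 0 := by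
    rw [map_mul, memNullDvd_iff_aeval_map_eq_zero.1 hf, zero_mul]
  have h₁ := hν₁.natDegree_le_of_aeval_map_eq_zero (monic_mul_leadingCoeff_inv hq) hqA
  rw [natDegree_mul_leadingCoeff_inv _ hq] at h₁
  have h₂ : q.natDegree ≤ f.natDegree := natDegree_map_le
  have h₃ := natDegree_lt_natDegree (fun hf0 => hq (by simp [q, hf0])) hdeg
  omega

theorem IsMinPolyMod.C_pow_dvd_of_degree_lt (hp : Prime p) (hν₁ : IsMinPolyMod A p ν₁) :
    ∀ {j : ℕ} {f : D[X]}, memNullDvd A (p ^ j) f → f.degree < ν₁.degree → C (p ^ j) ∣ f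
  | 0, _, _, _ => by simp
  | j + 1, _, hf, hdeg => by
    obtain ⟨s, rfl⟩ :=
      hν₁.C_dvd_of_degree_lt hp (hf.of_dvd (dvd_pow_self p j.succ_ne_zero)) hdeg
    rw [pow_succ', C_mul]
    refine mul_dvd_mul_left _ (hν₁.C_pow_dvd_of_degree_lt hp ?_ ?_)
    · exact memNullDvd.of_C_mul hp.ne_zero (pow_succ' p j ▸ hf)
    · rwa [degree_C_mul hp.ne_zero] at hdeg

theorem IsMinPolyMod.eq_zero_of_aeval_eq_zero (hp : Prime p) (hν₁ : IsMinPolyMod A p ν₁)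
    {q : (D ⧸ Ideal.span {p ^ j})[X]} (hq : q.degree < ν₁.degree)
    (h : aeval (A.map (Ideal.Quotient.mk (Ideal.span {p ^ j}))) q = 0) : q = 0 := by
  obtain ⟨f, rfl, hf⟩ :=
    exists_degree_eq_of_mem_lifts (map_surjective _ Ideal.Quotient.mk_surjective q)
  exact map_quotientMk_span_singleton_eq_zero_iff.2
    (hν₁.C_pow_dvd_of_degree_lt hp (memNullDvd_iff_aeval_map_eq_zero.2 h) (hf ▸ hq))

theorem memNullDvd_pow_iff_of_natDegree_le (hp : Prime p) (hν₁ : IsMinPolyMod A p ν₁)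
    (hν : ν.Monic) (hνA : memNullDvd A (p ^ j) ν) (hdeg : ν.natDegree ≤ ν₁.natDegree)
    (f : D[X]) : memNullDvd A (p ^ j) f ↔ ∃ g h : D[X], f = ν * g + C (p ^ j) * h := by
  rw [memNullDvd_iff_aeval_map_eq_zero] at hνA ⊢
  constructor
  · intro hf
    have hr : C (p ^ j) ∣ f %ₘ ν := by
      refine hν₁.C_pow_dvd_of_degree_lt hp (memNullDvd_iff_aeval_map_eq_zero.2 ?_) ?_
      · rw [modByMonic_eq_sub_mul_div f ν, Polynomial.map_sub, Polynomial.map_mul, map_sub,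
          map_mul, hf, hνA, zero_mul, sub_zero]
      · rw [degree_eq_natDegree hν₁.1.ne_zero]
        exact (degree_modByMonic_lt f hν).trans_le
          ((degree_eq_natDegree hν.ne_zero).trans_le (WithBot.coe_le_coe.2 hdeg))
    obtain ⟨h, hh⟩ := hr
    exact ⟨f /ₘ ν, h, by linear_combination hh - modByMonic_add_div f ν⟩
  · rintro ⟨g, h, rfl⟩
    rw [Polynomial.map_add, Polynomial.map_mul, Polynomial.map_mul, map_C,
      Ideal.Quotient.mk_singleton_self, C_0, zero_mul, add_zero, map_mul, hνA, zero_mul]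

theorem nonempty_adjoin_linearEquiv_of_natDegree_le (hp : Prime p) (hν₁ : IsMinPolyMod A p ν₁)
    (hj : j ≠ 0) (hν : ν.Monic) (hνA : memNullDvd A (p ^ j) ν)
    (hdeg : ν.natDegree ≤ ν₁.natDegree) :
    Nonempty (Algebra.adjoin (D ⧸ Ideal.span {p ^ j})
        {A.map (Ideal.Quotient.mk (Ideal.span {p ^ j}))}
      ≃ₗ[D ⧸ Ideal.span {p ^ j}] (Fin ν₁.natDegree → D ⧸ Ideal.span {p ^ j})) := by
  have := nontrivial_quotient_span_pow hp hj
  obtain ⟨e⟩ := nonempty_adjoin_singleton_linearEquiv_of_ker_aeval (hν.map _)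
    (ker_aeval_map_eq_span_of_memNullDvd_iff
      (memNullDvd_pow_iff_of_natDegree_le hp hν₁ hν hνA hdeg))
  rw [hν.natDegree_map, le_antisymm hdeg (hν₁.natDegree_le_of_dvd (dvd_pow_self p hj) hν hνA)]
    at e
  exact ⟨e⟩

theorem natDegree_le_of_adjoin_linearEquiv (hp : Prime p) (hν₁ : IsMinPolyMod A p ν₁)
    (hν : IsMinPolyMod A (p ^ j) ν)
    (e : Algebra.adjoin (D ⧸ Ideal.span {p ^ j}) {A.map (Ideal.Quotient.mk (Ideal.span {p ^ j}))}
      ≃ₗ[D ⧸ Ideal.span {p ^ j}] (Fin ν₁.natDegree → D ⧸ Ideal.span {p ^ j})) :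
    ν.natDegree ≤ ν₁.natDegree := by
  have := isArtinianRing_quotient_span_singleton (pow_ne_zero j hp.ne_zero)
  obtain ⟨g, hg, hgdeg, hgA⟩ := exists_monic_aeval_eq_zero_of_linearEquiv e fun q hq hqA =>
    hν₁.eq_zero_of_aeval_eq_zero hp (by rwa [degree_eq_natDegree hν₁.1.ne_zero]) hqA
  exact (hν.natDegree_le_of_aeval_map_eq_zero hg hgA).trans hgdeg

end PrincipalIdealDomain

/-- Let `p ∈ D` be prime, `A` a matrix over `D`, `ℓ ∈ ℕ` with `ℓ ≥ 1`,
`ν_j` `(p^j)`-minimal polynomials of `A` for `1 ≤ j ≤ ℓ`, `Ā_j` the image of `A` over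
`D/(p^j)` and `d_p` the `p`-degree of `A`. The following are equivalent:
(1) `N_{(p^ℓ)}(A) = ν_ℓ·D[X] + p^ℓ·D[X]`;
(2) `N_{(p^j)}(A) = ν_j·D[X] + p^j·D[X]` for all `1 ≤ j ≤ ℓ`;
(3) `(D/(p^j))[Ā_j] ≅ (D/(p^j))^{d_p}` as `D/(p^j)`-modules for all `1 ≤ j ≤ ℓ`;
(4) `deg ν_ℓ = d_p`;
(5) `ν_ℓ` is a `(p^j)`-minimal polynomial of `A` for all `1 ≤ j ≤ ℓ`. -/
theorem stmt14 {D : Type*} [CommRing D] [IsDomain D] [IsPrincipalIdealRing D]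
    (p : D) (hp : Prime p) (ℓ : ℕ) (hℓ : 1 ≤ ℓ)
    {n : ℕ} (A : Matrix (Fin n) (Fin n) D)
    (ν : ℕ → Polynomial D) (hν : ∀ j, 1 ≤ j → j ≤ ℓ → IsMinPolyMod A (p ^ j) (ν j))
    (dp : ℕ) (hdp : dp = (ν 1).natDegree) :
    [ (∀ f : Polynomial D, memNullDvd A (p ^ ℓ) f ↔
        ∃ g h : Polynomial D, f = ν ℓ * g + Polynomial.C (p ^ ℓ) * h),
      (∀ j, 1 ≤ j → j ≤ ℓ → ∀ f : Polynomial D, memNullDvd A (p ^ j) f ↔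
        ∃ g h : Polynomial D, f = ν j * g + Polynomial.C (p ^ j) * h),
      (∀ j, 1 ≤ j → j ≤ ℓ →
        Nonempty (
          (Algebra.adjoin (D ⧸ Ideal.span {p ^ j})
              {A.map (Ideal.Quotient.mk (Ideal.span {p ^ j}))})
            ≃ₗ[D ⧸ Ideal.span {p ^ j}] (Fin dp → (D ⧸ Ideal.span {p ^ j})))),
      ((ν ℓ).natDegree = dp),
      (∀ j, 1 ≤ j → j ≤ ℓ → IsMinPolyMod A (p ^ j) (ν ℓ))
    ].TFAE := by
  subst hdp
  have hν₁ : IsMinPolyMod A p (ν 1) := pow_one p ▸ hν 1 le_rfl hℓ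
  have hνℓ := hν ℓ hℓ le_rfl
  have hνℓA (j) (hjℓ : j ≤ ℓ) : memNullDvd A (p ^ j) (ν ℓ) := hνℓ.2.1.of_dvd (pow_dvd_pow p hjℓ)
  have hν₁ℓ : (ν 1).natDegree ≤ (ν ℓ).natDegree :=
    hν₁.natDegree_le_of_dvd (dvd_pow_self p (by omega)) hνℓ.1 hνℓ.2.1
  obtain ⟨k, rfl⟩ : ∃ k, ℓ = k + 1 := ⟨ℓ - 1, by omega⟩
  tfae_have 1 → 4 := fun h1 =>
    le_antisymm (natDegree_le_of_forall_memNullDvd_iff hp hν₁.1 hν₁.2.1 hνℓ.1 h1) hν₁ℓ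
  tfae_have 4 → 2 := fun h4 j hj hjℓ =>
    memNullDvd_pow_iff_of_natDegree_le hp hν₁ (hν j hj hjℓ).1 (hν j hj hjℓ).2.1
      (h4 ▸ (hν j hj hjℓ).natDegree_le_of_dvd dvd_rfl hνℓ.1 (hνℓA j hjℓ))
  tfae_have 2 → 1 := fun h2 => h2 (k + 1) hℓ le_rfl
  tfae_have 4 → 5 := fun h4 j hj hjℓ =>
    hν₁.of_natDegree_le (dvd_pow_self p (by omega)) hνℓ.1 (hνℓA j hjℓ) h4.le
  tfae_have 5 → 4 := fun h5 => (pow_one p ▸ h5 1 le_rfl hℓ).natDegree_eq hν₁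
  tfae_have 4 → 3 := fun h4 j hj hjℓ =>
    nonempty_adjoin_linearEquiv_of_natDegree_le hp hν₁ (by omega) hνℓ.1 (hνℓA j hjℓ) h4.le
  tfae_have 3 → 4 := fun h3 =>
    le_antisymm (natDegree_le_of_adjoin_linearEquiv hp hν₁ hνℓ (h3 (k + 1) hℓ le_rfl).some) hν₁ℓ
  tfae_finish
end
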